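/- arXiv:1711.05035 — 2 statements merged into one kernel-verified Lean document; each statement's English description precedes it below -/
import Mathlib

section
/- Let f : ℕ → ℕ be monotonically increasing and suppose that its Grundy function satisfies G_f(y,z) = y ⊕ z for all y, z ∈ ℕ with y ≤ f(z). Then for all y, z ∈ ℕ with y ≤ f(z), the set {G_f(min(y, f(w)), w) : w < z} equals the set {y ⊕ w : w < z}. -/
/-!
Let `x` be the value of the move from `(y, z)` to `(min y (f w), w)` with `w < z`. If
`y ⊕ x ≥ z`, then `y ≤ f (y ⊕ x)` by monotonicity, so the position `(y, y ⊕ x)` has value `x`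
although this same move is one of its options, which the mex rule forbids. Hence
`x = y ⊕ w'` with `w' = y ⊕ x < z`.
Conversely, for `Z = 2 ^ k` large, `y ⊕ w < y ⊕ Z` is the value of some option of `(y, Z)`.
It is not a move in the first coordinate, whose values `v ⊕ Z` are at least `2 ^ k`, nor a
move to `w' ≥ z`, whose value is `y ⊕ w' ≠ y ⊕ w`; so it is a move to some `w' < z`.
-/

/-- The minimum excluded value of a set of natural numbers. -/
noncomputable def mex (S : Set ℕ) : ℕ := sInf {n | n ∉ S}

/-- The Grundy function of the chocolate bar game `CB(f,·,·)`:
`G_f(y,z) = mex({G_f(v,z) : v < y} ∪ {G_f(min(y, f w), w) : w < z})`. -/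
noncomputable def grundy (f : ℕ → ℕ) (y z : ℕ) : ℕ :=
  mex ({x | ∃ v, ∃ _ : v < y, x = grundy f v z} ∪
       {x | ∃ w, ∃ _ : w < z, x = grundy f (min y (f w)) w})
termination_by (z, y)

lemma mem_of_lt_mex {S : Set ℕ} {n : ℕ} (h : n < mex S) : n ∈ S :=
  not_not.mp fun hn => (Nat.sInf_le hn).not_gt h

lemma mex_notMem {S : Set ℕ} (h : S.Finite) : mex S ∉ S :=
  Nat.sInf_mem h.infinite_compl.nonempty

lemma two_pow_le_xor_two_pow {a k : ℕ} (h : a < 2 ^ k) : 2 ^ k ≤ a ^^^ 2 ^ k :=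
  Nat.ge_two_pow_of_testBit <| by
    simp [Nat.testBit_xor, Nat.testBit_lt_two_pow h, Nat.testBit_two_pow_self]

lemma exists_two_pow_gt (a b c : ℕ) : ∃ k, a < 2 ^ k ∧ b < 2 ^ k ∧ c < 2 ^ k := by
  refine ⟨a + b + c, ?_, ?_, ?_⟩ <;>
    exact (Nat.lt_two_pow_self).trans_le (Nat.pow_le_pow_right two_pos (by omega))

section Grundy

variable (f : ℕ → ℕ)

def grundyOptions (y z : ℕ) : Set ℕ :=
  {x | ∃ v, ∃ _ : v < y, x = grundy f v z} ∪ {x | ∃ w, ∃ _ : w < z, x = grundy f (min y (f w)) w}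

lemma grundy_eq_mex (y z : ℕ) : grundy f y z = mex (grundyOptions f y z) := by
  rw [grundy, grundyOptions]

lemma grundyOptions_finite (y z : ℕ) : (grundyOptions f y z).Finite := by
  refine .union ?_ ?_
  · exact ((Set.finite_Iio y).image (fun v => grundy f v z)).subset
      fun _ ⟨v, hv, hx⟩ => ⟨v, hv, hx.symm⟩
  · exact ((Set.finite_Iio z).image (fun w => grundy f (min y (f w)) w)).subset
      fun _ ⟨w, hw, hx⟩ => ⟨w, hw, hx.symm⟩

lemma grundy_notMem_grundyOptions (y z : ℕ) : grundy f y z ∉ grundyOptions f y z := by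
  rw [grundy_eq_mex]
  exact mex_notMem (grundyOptions_finite f y z)

lemma mem_grundyOptions_of_lt_grundy {x y z : ℕ} (h : x < grundy f y z) :
    x ∈ grundyOptions f y z :=
  mem_of_lt_mex (grundy_eq_mex f y z ▸ h)

variable {f} (hmono : Monotone f) (hG : ∀ y z : ℕ, y ≤ f z → grundy f y z = y ^^^ z)
include hmono hG

lemma xor_grundy_move_lt {y z w : ℕ} (hyz : y ≤ f z) (hw : w < z) :
    y ^^^ grundy f (min y (f w)) w < z := by
  set x := grundy f (min y (f w)) w
  by_contra! hZ
  have hvalue : grundy f y (y ^^^ x) = x := by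
    rw [hG y _ (hyz.trans (hmono hZ)), xor_cancel_left]
  apply grundy_notMem_grundyOptions f y (y ^^^ x)
  rw [hvalue]
  exact Or.inr ⟨w, hw.trans_le hZ, rfl⟩

lemma exists_grundy_move_eq_xor {y z w : ℕ} (hyz : y ≤ f z) (hw : w < z) :
    ∃ w' < z, grundy f (min y (f w')) w' = y ^^^ w := by
  obtain ⟨k, hyk, hwk, hzk⟩ := exists_two_pow_gt y w z
  have hyZ : y ≤ f (2 ^ k) := hyz.trans (hmono hzk.le)
  have hlt : y ^^^ w < grundy f y (2 ^ k) := by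
    rw [hG y _ hyZ]
    exact (Nat.xor_lt_two_pow hyk hwk).trans_le (two_pow_le_xor_two_pow hyk)
  rcases mem_grundyOptions_of_lt_grundy f hlt with ⟨v, hv, hxv⟩ | ⟨w', -, hxw'⟩
  · rw [hG v _ (hv.le.trans hyZ)] at hxv
    exact absurd (two_pow_le_xor_two_pow (hv.trans hyk))
      (hxv ▸ Nat.xor_lt_two_pow hyk hwk).not_ge
  · refine ⟨w', ?_, hxw'.symm⟩
    by_contra! hzw'
    have hyw' : y ≤ f w' := hyz.trans (hmono hzw')
    rw [min_eq_left hyw', hG y w' hyw', Nat.xor_right_inj] at hxw'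
    omega

end Grundy

theorem stmt_10 (f : ℕ → ℕ) (hmono : Monotone f)
    (hG : ∀ y z : ℕ, y ≤ f z → grundy f y z = y ^^^ z)
    (y z : ℕ) (hyz : y ≤ f z) :
    {x | ∃ w < z, x = grundy f (min y (f w)) w} = {x | ∃ w < z, x = y ^^^ w} := by
  ext x
  constructor
  · rintro ⟨w, hw, rfl⟩
    exact ⟨_, xor_grundy_move_lt hmono hG hyz hw, (xor_cancel_left _ _).symm⟩
  · rintro ⟨w, hw, rfl⟩
    obtain ⟨w', hw', hx⟩ := exists_grundy_move_eq_xor hmono hG hyz hw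
    exact ⟨w', hw', hx.symm⟩
end

section
/- Let k ≥ 1 and s ≥ 1 be natural numbers, and define h_s : ℕ → ℕ by h_s(z) = ⌊(z+s)/(2k)⌋. Then there exist a non-negative integer v and a natural number m with 1 ≤ m ≤ 2k−1 such that s = m·2^v, if and only if the Grundy function of the chocolate bar game satisfies G_{h_s}(y,z) = (y ⊕ (z+s)) − s for all y, z ∈ ℕ with y ≤ h_s(z). -/
/-!
Write `Z = z + s`. In the region `2k·y ≤ Z` the moves from `(y, z)` go to `(y', z)` with
`y' < y`, and to `(min y ⌊W/2k⌋, W - s)` with `s ≤ W < Z`. The heart of the matter is a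
property of the nim-sum, proved by halving: if `q < y`, `t ⊕ q < 2k(q+1)` and `t ⊕ q < t ⊕ y`,
then `t ⊕ y < 2k·y`. It separates `y ⊕ Z` from the values of the capped options, and it makes
`W ↦ ⌊W/2k⌋ ⊕ W` injective, hence by counting surjective, which supplies the capped options
realising the values below `y ⊕ Z`. When `s = m·2^v` with `m < 2k`, every `y ⊕ Z` in the region
is at least `s`, so the subtraction of `s` is harmless and the mex computation goes through by
induction. Conversely, if `s = 2^e·o` with `o` odd and `o ≥ 2k`, then `G(2^e, 0) = 2^e`,
whereas `2^e ⊕ s < s` makes the formula vanish.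
-/

theorem Nat.xor_le_add (a b : ℕ) : a ^^^ b ≤ a + b := by
  induction a using Nat.strong_induction_on generalizing b with
  | _ a ih =>
    rcases Nat.eq_zero_or_pos a with rfl | ha
    · simp
    have hhalf := ih (a / 2) (by omega) (b / 2)
    rw [← Nat.xor_div_two] at hhalf
    have hmod := @Nat.xor_mod_two_eq a b
    omega

theorem Nat.xor_div_two_pow_of_lt {a b n : ℕ} (ha : a < 2 ^ n) :
    (a ^^^ b) / 2 ^ n = b / 2 ^ n := by
  rw [Nat.xor_div_two_pow, Nat.div_eq_of_lt ha, Nat.zero_xor]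

theorem xor_lt_mul_of_xor_lt {k q y t : ℕ} (hqy : q < y) (hq : t ^^^ q < 2 * k * (q + 1))
    (ht : t ^^^ q < t ^^^ y) : t ^^^ y < 2 * k * y := by
  induction y using Nat.strong_induction_on generalizing q t with
  | _ y ih =>
    have hhalf : t / 2 ^^^ q / 2 ≤ t / 2 ^^^ y / 2 := by
      rw [← Nat.xor_div_two, ← Nat.xor_div_two]
      exact Nat.div_le_div_right ht.le
    by_cases hqy2 : q / 2 = y / 2
    · -- `y = q + 1`, so `t ^^^ y = (t ^^^ q) + 1`; both sides of `t ^^^ q < 2k(q + 1)` are even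
      have hyq : y = q + 1 := by omega
      have hdiv : (t ^^^ q) / 2 = (t ^^^ y) / 2 := by rw [Nat.xor_div_two, Nat.xor_div_two, hqy2]
      have : 2 * k * (q + 1) = 2 * (k * (q + 1)) := by ring
      subst hyq
      omega
    · have hlt : t / 2 ^^^ q / 2 < t / 2 ^^^ y / 2 :=
        lt_of_le_of_ne hhalf (by rwa [Ne, Nat.xor_right_inj])
      have hq' : t / 2 ^^^ q / 2 < 2 * k * (q / 2 + 1) := by
        have : 2 * k * (q + 1) ≤ 2 * k * (2 * (q / 2 + 1)) := Nat.mul_le_mul_left _ (by omega)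
        have : 2 * k * (2 * (q / 2 + 1)) = 2 * (2 * k * (q / 2 + 1)) := by ring
        rw [← Nat.xor_div_two]
        omega
      have ih' := ih (y / 2) (by omega) (by omega) hq' hlt
      rw [← Nat.xor_div_two] at ih'
      have : 2 * k * (2 * (y / 2)) ≤ 2 * k * y := Nat.mul_le_mul_left _ (Nat.mul_div_le y 2)
      have : 2 * k * (2 * (y / 2)) = 2 * (2 * k * (y / 2)) := by ring
      omega

theorem xor_lt_mul_of_le {k t y q : ℕ} (h : t ^^^ y < 2 * k * y) (hyq : y ≤ q) :
    t ^^^ q < 2 * k * q := by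
  rcases hyq.eq_or_lt with rfl | hyq
  · exact h
  by_cases ht : t ^^^ y < t ^^^ q
  · exact xor_lt_mul_of_xor_lt hyq (h.trans_le (Nat.mul_le_mul_left _ (by omega))) ht
  · have hne : t ^^^ q ≠ t ^^^ y := by rw [Ne, Nat.xor_right_inj]; exact hyq.ne'
    exact (lt_of_le_of_ne (not_lt.mp ht) hne).trans (h.trans_le (Nat.mul_le_mul_left _ hyq.le))

theorem div_xor_self_injective {k : ℕ} (hk : 0 < k) :
    Function.Injective fun W => W / (2 * k) ^^^ W := by
  suffices ∀ W W', W < W' → W / (2 * k) ^^^ W ≠ W' / (2 * k) ^^^ W' by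
    intro W W' h
    by_contra hne
    rcases Nat.lt_or_gt_of_ne hne with hlt | hlt
    exacts [this W W' hlt h, this W' W hlt h.symm]
  intro W W' hlt h
  rcases (Nat.div_le_div_right (c := 2 * k) hlt.le).eq_or_lt with hq | hq
  · rw [hq, Nat.xor_right_inj] at h
    exact hlt.ne h
  have hW : (W / (2 * k) ^^^ W) ^^^ W / (2 * k) = W := by rw [Nat.xor_comm, xor_cancel_left]
  have hW' : (W / (2 * k) ^^^ W) ^^^ W' / (2 * k) = W' := by rw [h, Nat.xor_comm, xor_cancel_left]
  have key := xor_lt_mul_of_xor_lt hq (by rw [hW]; exact Nat.lt_mul_div_succ W (by omega))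
    (by rw [hW, hW']; exact hlt)
  rw [hW'] at key
  exact (Nat.mul_div_le W' (2 * k)).not_gt key

theorem exists_div_xor_self_eq {k : ℕ} (hk : 0 < k) (t : ℕ) : ∃ W, W / (2 * k) ^^^ W = t := by
  have hmaps :
      Set.MapsTo (fun W => W / (2 * k) ^^^ W) (Finset.range (2 ^ t)) (Finset.range (2 ^ t)) := by
    intro W hW
    simp only [Finset.coe_range, Set.mem_Iio] at hW ⊢
    exact Nat.xor_lt_two_pow ((Nat.div_le_self _ _).trans_lt hW) hW
  obtain ⟨W, -, hW⟩ := Finset.surjOn_of_injOn_of_card_le _ hmaps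
    (div_xor_self_injective hk).injOn le_rfl (Finset.mem_range.mpr t.lt_two_pow_self)
  exact ⟨W, hW⟩

theorem xor_lt_of_mul_le {k m v a W : ℕ} (hm : m < 2 * k) (haW : 2 * k * a ≤ W)
    (hW : W < m * 2 ^ v) : a ^^^ W < m * 2 ^ v := by
  have ha : a < 2 ^ v := by
    by_contra! ha
    have := Nat.mul_le_mul_left (2 * k) ha
    have := Nat.mul_lt_mul_of_pos_right hm (Nat.two_pow_pos v)
    omega
  rw [← Nat.div_lt_iff_lt_mul (by positivity), Nat.xor_div_two_pow_of_lt ha]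
  exact Nat.div_lt_of_lt_mul (by rwa [Nat.mul_comm])

theorem le_xor_of_mul_le {k m v y Z : ℕ} (hm : m < 2 * k) (hyZ : 2 * k * y ≤ Z)
    (hZ : m * 2 ^ v ≤ Z) : m * 2 ^ v ≤ y ^^^ Z := by
  by_contra! hlt
  have hy : y < 2 ^ v := by
    have : Z ≤ y + (y ^^^ Z) := by
      calc Z = y ^^^ (y ^^^ Z) := (xor_cancel_left y Z).symm
        _ ≤ y + (y ^^^ Z) := Nat.xor_le_add _ _
    nlinarith
  rw [← Nat.div_lt_iff_lt_mul (by positivity), Nat.xor_div_two_pow_of_lt hy] at hlt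
  exact hlt.not_ge ((Nat.le_div_iff_mul_le (by positivity)).mpr hZ)

theorem mex_eq_of_forall_lt_mem {S : Set ℕ} {g : ℕ} (hg : g ∉ S) (hlt : ∀ u < g, u ∈ S) :
    mex S = g :=
  le_antisymm (Nat.sInf_le hg) (le_csInf ⟨g, hg⟩ fun u hu => not_lt.mp fun h => hu (hlt u h))

theorem grundy_zero_right (f : ℕ → ℕ) (y : ℕ) : grundy f y 0 = y := by
  induction y using Nat.strong_induction_on with
  | _ y ih =>
    rw [grundy]
    apply mex_eq_of_forall_lt_mem
    · rintro (⟨v, hv, hx⟩ | ⟨w, hw, -⟩)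
      · rw [ih v hv] at hx
        omega
      · omega
    · exact fun u hu => Or.inl ⟨u, hu, (ih u hu).symm⟩

theorem min_div_xor_ne {k y W Z : ℕ} (hk : 0 < k) (hyZ : 2 * k * y ≤ Z) (hWZ : W < Z) :
    min y (W / (2 * k)) ^^^ W ≠ y ^^^ Z := by
  intro h
  rcases le_or_gt y (W / (2 * k)) with hy | hq
  · rw [min_eq_left hy, Nat.xor_right_inj] at h
    exact hWZ.ne h
  rw [min_eq_right hq.le] at h
  have hW : (y ^^^ Z) ^^^ W / (2 * k) = W := by rw [← h, Nat.xor_comm, xor_cancel_left]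
  have hZ : (y ^^^ Z) ^^^ y = Z := by rw [Nat.xor_comm, xor_cancel_left]
  have key := xor_lt_mul_of_xor_lt hq (by rw [hW]; exact Nat.lt_mul_div_succ W (by omega))
    (by rw [hW, hZ]; exact hWZ)
  rw [hZ] at key
  exact key.not_ge hyZ

theorem exists_xor_eq_of_lt {k m v y Z t : ℕ} (hk : 0 < k) (hm : m < 2 * k)
    (hyZ : 2 * k * y ≤ Z) (hst : m * 2 ^ v ≤ t) (ht : t < y ^^^ Z) :
    (∃ y' < y, y' ^^^ Z = t) ∨
      ∃ W, m * 2 ^ v ≤ W ∧ W < Z ∧ min y (W / (2 * k)) ^^^ W = t := by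
  rcases Nat.lt_xor_cases ht with h | h
  · exact Or.inl ⟨t ^^^ Z, h, xor_cancel_right t Z⟩
  right
  by_cases hcap : 2 * k * y ≤ t ^^^ y
  · have hmin : min y ((t ^^^ y) / (2 * k)) = y :=
      min_eq_left ((Nat.le_div_iff_mul_le (by omega)).mpr (by linarith))
    have hval : y ^^^ (t ^^^ y) = t := by rw [Nat.xor_comm t, xor_cancel_left]
    refine ⟨t ^^^ y, ?_, h, by rw [hmin, hval]⟩
    by_contra! hW
    exact (xor_lt_of_mul_le hm hcap hW).not_ge (by rwa [hval])
  · -- a move where the cap `⌊W/2k⌋` is active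
    obtain ⟨W, hW⟩ := exists_div_xor_self_eq hk t
    have hWt : t ^^^ W / (2 * k) = W := by rw [← hW, Nat.xor_comm, xor_cancel_left]
    have hqy : W / (2 * k) < y := by
      by_contra! hyq
      have := xor_lt_mul_of_le (not_le.mp hcap) hyq
      rw [hWt] at this
      exact (Nat.mul_div_le W (2 * k)).not_gt this
    refine ⟨W, ?_, ?_, by rw [min_eq_right hqy.le, hW]⟩
    · by_contra! hsW
      exact (xor_lt_of_mul_le hm (Nat.mul_div_le W (2 * k)) hsW).not_ge (hW ▸ hst)
    · calc W < 2 * k * (W / (2 * k) + 1) := Nat.lt_mul_div_succ W (by omega)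
        _ ≤ 2 * k * y := Nat.mul_le_mul_left _ hqy
        _ ≤ Z := hyZ

theorem grundy_eq_xor_sub {k m v s : ℕ} (hk : 0 < k) (hm : m < 2 * k) (hs : s = m * 2 ^ v)
    (z y : ℕ) (hy : 2 * k * y ≤ z + s) :
    grundy (fun t => (t + s) / (2 * k)) y z = (y ^^^ (z + s)) - s := by
  subst hs
  induction z using Nat.strong_induction_on generalizing y with
  | _ z ihz =>
  induction y using Nat.strong_induction_on with
  | _ y ihy =>
  have hval := le_xor_of_mul_le (v := v) hm hy (by omega)
  have hreg : ∀ y' < y, 2 * k * y' ≤ z + m * 2 ^ v :=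
    fun y' hy' => (Nat.mul_le_mul_left _ hy'.le).trans hy
  have hreg' : ∀ w, 2 * k * min y ((w + m * 2 ^ v) / (2 * k)) ≤ w + m * 2 ^ v :=
    fun w => (Nat.mul_le_mul_left _ (min_le_right _ _)).trans (Nat.mul_div_le _ _)
  rw [grundy]
  apply mex_eq_of_forall_lt_mem
  · rintro (⟨y', hy', hval'⟩ | ⟨w, hw, hval'⟩)
    · rw [ihy y' hy' (hreg y' hy')] at hval'
      have hge := le_xor_of_mul_le (v := v) hm (hreg y' hy') (by omega)
      exact hy'.ne' ((Nat.xor_left_inj (z := z + m * 2 ^ v)).mp (by omega))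
    · rw [ihz w hw _ (hreg' w)] at hval'
      have hge := le_xor_of_mul_le (v := v) hm (hreg' w) (by omega)
      exact min_div_xor_ne hk hy (by omega : w + m * 2 ^ v < z + m * 2 ^ v) (by omega)
  · intro u hu
    rcases exists_xor_eq_of_lt (v := v) hk hm hy (t := u + m * 2 ^ v) (by omega) (by omega) with
      ⟨y', hy', hxor⟩ | ⟨W, hsW, hWZ, hxor⟩
    · exact Or.inl ⟨y', hy', by rw [ihy y' hy' (hreg y' hy'), hxor]; omega⟩
    · refine Or.inr ⟨W - m * 2 ^ v, by omega, ?_⟩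
      have hW := Nat.sub_add_cancel hsW
      rw [ihz _ (by omega) _ (hreg' _), hW, hxor]
      omega

theorem two_pow_xor_two_pow_mul_lt {e o : ℕ} (ho : Odd o) : 2 ^ e ^^^ 2 ^ e * o < 2 ^ e * o := by
  rw [Nat.mul_comm, ← Nat.div_lt_iff_lt_mul (Nat.two_pow_pos e), Nat.xor_div_two_pow,
    Nat.div_self (Nat.two_pow_pos e), Nat.mul_div_cancel _ (Nat.two_pow_pos e), Nat.xor_comm,
    Nat.xor_one_of_odd ho]
  exact Nat.sub_lt ho.pos one_pos

theorem stmt_19 (k s : ℕ) (hk : 1 ≤ k) (hs : 1 ≤ s) :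
    (∃ v m : ℕ, 1 ≤ m ∧ m ≤ 2 * k - 1 ∧ s = m * 2 ^ v) ↔
    (∀ y z : ℕ, y ≤ (z + s) / (2 * k) →
      grundy (fun t => (t + s) / (2 * k)) y z = (y ^^^ (z + s)) - s) := by
  constructor
  · rintro ⟨v, m, -, hm, hsm⟩ y z hy
    rw [Nat.le_div_iff_mul_le (by omega), Nat.mul_comm] at hy
    exact grundy_eq_xor_sub hk (by omega) hsm z y hy
  · intro h
    obtain ⟨e, o, ho, rfl⟩ := Nat.exists_eq_two_pow_mul_odd (n := s) (by omega)
    by_contra hne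
    have hko : 2 * k ≤ o := by
      by_contra! hlt
      exact hne ⟨e, o, ho.pos, by omega, Nat.mul_comm _ _⟩
    have hy : 2 ^ e ≤ (0 + 2 ^ e * o) / (2 * k) := by
      rw [zero_add, Nat.le_div_iff_mul_le (by omega)]
      exact Nat.mul_le_mul_left _ hko
    have hval := h (2 ^ e) 0 hy
    rw [grundy_zero_right, zero_add,
      Nat.sub_eq_zero_of_le (two_pow_xor_two_pow_mul_lt ho).le] at hval
    exact (Nat.two_pow_pos e).ne' hval
end
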